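/- arXiv:1209.1767 — 3 statements merged into one kernel-verified Lean document; each statement's English description precedes it below -/
import Mathlib

section
/- Let X, Y be Hilbert spaces, A ∈ B(X,Y), and T ⊆ X, S ⊆ Y closed subspaces such that G = A_{T,S}^{(2)} exists. If T' is a closed subspace of X with δ̂(T,T') < 1, then for every x' ∈ T' one has ‖G‖·‖Ax'‖ ≥ [1 − (1 + ‖A‖·‖G‖)·δ(T',T)]·‖x'‖. -/
noncomputable section

open ContinuousLinearMap

/-- δ(M,N) = sup{dist(x,N) : x ∈ M, ‖x‖ = 1}, with sSup ∅ = 0 covering M = {0}. -/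
def gapDelta {H : Type*} [NormedAddCommGroup H] (M N : Set H) : ℝ :=
  sSup ((fun x => Metric.infDist x N) '' {x | x ∈ M ∧ ‖x‖ = 1})

/-- The gap δ̂(M,N) = max{δ(M,N), δ(N,M)}. -/
def gapHat {H : Type*} [NormedAddCommGroup H] (M N : Set H) : ℝ :=
  max (gapDelta M N) (gapDelta N M)

/-- Orthogonal projection onto a closed subspace, as an operator H →L[ℂ] H. -/
def projCLM {H : Type*} [NormedAddCommGroup H] [InnerProductSpace ℂ H] [CompleteSpace H]
    (K : Submodule ℂ H) (hK : IsClosed (K : Set H)) : H →L[ℂ] H :=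
  haveI := hK.completeSpace_coe
  K.subtypeL.comp K.orthogonalProjectionOnto

/-- G is the outer inverse A_{T,S}^{(2)}: GAG = G, R(G) = T, N(G) = S. -/
def IsOuterInv {X Y : Type*} [NormedAddCommGroup X] [NormedSpace ℂ X]
    [NormedAddCommGroup Y] [NormedSpace ℂ Y]
    (A : X →L[ℂ] Y) (T : Submodule ℂ X) (S : Submodule ℂ Y) (G : Y →L[ℂ] X) : Prop :=
  G ∘L (A ∘L G) = G ∧ LinearMap.range (G : Y →ₗ[ℂ] X) = T ∧ LinearMap.ker (G : Y →ₗ[ℂ] X) = S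

/-- B is the Moore–Penrose inverse of A. -/
def IsMPInv {X Y : Type*} [NormedAddCommGroup X] [InnerProductSpace ℂ X] [CompleteSpace X]
    [NormedAddCommGroup Y] [InnerProductSpace ℂ Y] [CompleteSpace Y]
    (A : X →L[ℂ] Y) (B : Y →L[ℂ] X) : Prop :=
  A ∘L (B ∘L A) = A ∧ B ∘L (A ∘L B) = B ∧
  adjoint (A ∘L B) = A ∘L B ∧ adjoint (B ∘L A) = B ∘L A

variable {X Y : Type*} [NormedAddCommGroup X] [InnerProductSpace ℂ X] [CompleteSpace X]
  [NormedAddCommGroup Y] [InnerProductSpace ℂ Y] [CompleteSpace Y]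

open Metric Pointwise

section Gap

variable {𝕜 E : Type*} [RCLike 𝕜] [NormedAddCommGroup E] [NormedSpace 𝕜 E]

theorem Submodule.smul_coe_eq_self (N : Submodule 𝕜 E) {c : 𝕜} (hc : c ≠ 0) :
    c • (N : Set E) = N := by
  ext y
  simp [Set.mem_smul_set_iff_inv_smul_mem₀ hc, N.smul_mem_iff (inv_ne_zero hc)]

theorem Submodule.infDist_smul (N : Submodule 𝕜 E) (c : 𝕜) (x : E) :
    infDist (c • x) N = ‖c‖ * infDist x N := by
  rcases eq_or_ne c 0 with rfl | hc
  · simp [infDist_zero_of_mem N.zero_mem]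
  · rw [← infDist_smul₀ hc, N.smul_coe_eq_self hc]

theorem infDist_le_gapDelta {M N : Set E} (hN : (0 : E) ∈ N) {u : E} (hu : u ∈ M)
    (hu1 : ‖u‖ = 1) : infDist u N ≤ gapDelta M N := by
  refine le_csSup ⟨1, ?_⟩ ⟨u, ⟨hu, hu1⟩, rfl⟩
  rintro _ ⟨v, ⟨-, hv1⟩, rfl⟩
  simpa [hv1] using infDist_le_dist_of_mem (x := v) hN

theorem Submodule.infDist_le_gapDelta_mul (M N : Submodule 𝕜 E) {x : E} (hx : x ∈ M) :
    infDist x N ≤ gapDelta (M : Set E) N * ‖x‖ := by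
  rcases eq_or_ne x 0 with rfl | hx0
  · simp [infDist_zero_of_mem N.zero_mem]
  have hnorm : (‖x‖ : 𝕜) ≠ 0 := RCLike.ofReal_ne_zero.mpr (norm_ne_zero_iff.mpr hx0)
  set u : E := (‖x‖ : 𝕜)⁻¹ • x
  have hxu : x = (‖x‖ : 𝕜) • u := (smul_inv_smul₀ hnorm x).symm
  have hu1 : ‖u‖ = 1 := by simp [u, norm_smul, hx0]
  calc infDist x N = ‖x‖ * infDist u N := by
        conv_lhs => rw [hxu]
        rw [N.infDist_smul, RCLike.norm_ofReal, abs_norm]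
    _ ≤ ‖x‖ * gapDelta (M : Set E) N :=
        mul_le_mul_of_nonneg_left (infDist_le_gapDelta N.zero_mem (M.smul_mem _ hx) hu1)
          (norm_nonneg x)
    _ = gapDelta (M : Set E) N * ‖x‖ := mul_comm _ _

end Gap

namespace IsOuterInv

variable {E F : Type*} [NormedAddCommGroup E] [NormedSpace ℂ E] [NormedAddCommGroup F]
  [NormedSpace ℂ F] {A : E →L[ℂ] F} {T : Submodule ℂ E} {S : Submodule ℂ F} {G : F →L[ℂ] E}

theorem apply_apply_of_mem (hG : IsOuterInv A T S G) {x : E} (hx : x ∈ T) : G (A x) = x := by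
  obtain ⟨y, rfl⟩ : x ∈ LinearMap.range (G : F →ₗ[ℂ] E) := hG.2.1 ▸ hx
  exact congrArg (· y) hG.1

theorem norm_le_of_mem (hG : IsOuterInv A T S G) {x : E} (hx : x ∈ T) : ‖x‖ ≤ ‖G‖ * ‖A x‖ := by
  simpa only [hG.apply_apply_of_mem hx] using G.le_opNorm (A x)

theorem norm_le_add_infDist (hG : IsOuterInv A T S G) (x : E) :
    ‖x‖ ≤ ‖G‖ * ‖A x‖ + (1 + ‖A‖ * ‖G‖) * infDist x T := by
  have hpos : 0 < 1 + ‖A‖ * ‖G‖ := by positivity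
  have hnear : ∀ y ∈ T, ‖x‖ - ‖G‖ * ‖A x‖ ≤ (1 + ‖A‖ * ‖G‖) * dist x y := by
    intro y hy
    have hAy : ‖A y‖ ≤ ‖A x‖ + ‖A‖ * ‖x - y‖ := by
      calc ‖A y‖ = ‖A x - A (x - y)‖ := by rw [map_sub, sub_sub_cancel]
        _ ≤ ‖A x‖ + ‖A (x - y)‖ := norm_sub_le _ _
        _ ≤ ‖A x‖ + ‖A‖ * ‖x - y‖ := add_le_add_right (A.le_opNorm _) _
    calc ‖x‖ - ‖G‖ * ‖A x‖ ≤ ‖y‖ + ‖x - y‖ - ‖G‖ * ‖A x‖ := by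
          linarith [norm_le_insert' x y]
      _ ≤ ‖G‖ * ‖A y‖ + ‖x - y‖ - ‖G‖ * ‖A x‖ := by linarith [hG.norm_le_of_mem hy]
      _ ≤ ‖G‖ * (‖A x‖ + ‖A‖ * ‖x - y‖) + ‖x - y‖ - ‖G‖ * ‖A x‖ := by gcongr
      _ = (1 + ‖A‖ * ‖G‖) * dist x y := by rw [dist_eq_norm]; ring
  have hinf : (‖x‖ - ‖G‖ * ‖A x‖) / (1 + ‖A‖ * ‖G‖) ≤ infDist x T :=
    (le_infDist ⟨0, T.zero_mem⟩).2 fun y hy => (div_le_iff₀' hpos).2 (hnear y hy)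
  linarith [(div_le_iff₀' hpos).1 hinf]

end IsOuterInv

theorem stmt_6_general (A : X →L[ℂ] Y) (T T' : Submodule ℂ X) (S : Submodule ℂ Y)
    (G : Y →L[ℂ] X) (hG : IsOuterInv A T S G) :
    ∀ x' ∈ T',
      (1 - (1 + ‖A‖ * ‖G‖) * gapDelta (T' : Set X) (T : Set X)) * ‖x'‖ ≤ ‖G‖ * ‖A x'‖ := by
  intro x' hx'
  have hpos : 0 ≤ 1 + ‖A‖ * ‖G‖ := by positivity
  have hdist := mul_le_mul_of_nonneg_left (T'.infDist_le_gapDelta_mul T hx') hpos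
  linarith [hG.norm_le_add_infDist x']

theorem stmt_6 (A : X →L[ℂ] Y) (T T' : Submodule ℂ X) (S : Submodule ℂ Y)
    (hT : IsClosed (T : Set X)) (hT' : IsClosed (T' : Set X)) (hS : IsClosed (S : Set Y))
    (G : Y →L[ℂ] X) (hG : IsOuterInv A T S G)
    (hgap : gapHat (T : Set X) (T' : Set X) < 1) :
    ∀ x' ∈ T',
      (1 - (1 + ‖A‖ * ‖G‖) * gapDelta (T' : Set X) (T : Set X)) * ‖x'‖ ≤ ‖G‖ * ‖A x'‖ :=
  stmt_6_general A T T' S G hG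
end
end

section
/- Let X, Y be Hilbert spaces, A ∈ B(X,Y), and T, T' ⊆ X, S, S' ⊆ Y closed subspaces such that G = A_{T,S}^{(2)} exists and max{δ̂(T,T'), δ̂(S,S')} < 1/(1 + ‖A‖·‖G‖)². Then A_{T',S'}^{(2)} exists and ‖A_{T',S'}^{(2)}‖ ≤ ‖G‖ / (1 − ‖G‖·‖A‖·(δ̂(T,T') + δ̂(S,S'))). -/
/-!
Write `P_M` for the orthogonal projection onto `M`. The gap controls projections:
`‖P_M - P_N‖ ≤ δ̂(M, N) < 1`. Hence `V = 1 - (P_T - P_T')` and `W = 1 - (P_S' - P_S)` are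
invertible, `V` agrees with `P_T'` on `T` and maps it onto `T'`, and `W` agrees with `P_S` on `S'`
and maps it onto `S`. So if `H` is the outer inverse of `B = W A V` with range `T` and kernel `S`,
then `V H W` is `A_{T',S'}^{(2)}`; moreover `V H W = P_T' H (1 - P_S')`, so `‖V H W‖ ≤ ‖H‖`.
Finally `B` is a small perturbation of `A` on the range of `G`:
`‖(A - B) G‖ ≤ ‖G‖ ‖A‖ (δ̂(T, T') + δ̂(S, S')) = k < 1`, so `H = G (1 - (A - B) G)⁻¹` exists
and `‖H‖ ≤ ‖G‖ / (1 - k)`.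
-/

noncomputable section

open ContinuousLinearMap

section Gap

variable {𝕜 H : Type*} [RCLike 𝕜] [NormedAddCommGroup H] [InnerProductSpace 𝕜 H]

lemma gapDelta_nonneg (M N : Set H) : 0 ≤ gapDelta M N :=
  Real.sSup_nonneg (by rintro _ ⟨x, -, rfl⟩; exact Metric.infDist_nonneg)

lemma gapHat_nonneg (M N : Set H) : 0 ≤ gapHat M N :=
  le_max_of_le_left (gapDelta_nonneg M N)

variable {M N : Submodule 𝕜 H}

lemma infDist_le_gapDelta_s12 {x : H} (hx : x ∈ M) (hx1 : ‖x‖ = 1) :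
    Metric.infDist x N ≤ gapDelta (M : Set H) N := by
  refine le_csSup ⟨1, ?_⟩ ⟨x, ⟨hx, hx1⟩, rfl⟩
  rintro _ ⟨y, ⟨-, hy1⟩, rfl⟩
  simpa [hy1] using Metric.infDist_le_dist_of_mem (x := y) N.zero_mem

lemma norm_starProjection_orthogonal_le_infDist [N.HasOrthogonalProjection] (x : H) :
    ‖Nᗮ.starProjection x‖ ≤ Metric.infDist x N := by
  refine (Metric.le_infDist ⟨0, N.zero_mem⟩).2 fun y hy => ?_
  have hy0 : Nᗮ.starProjection y = 0 :=
    (Nᗮ.starProjection_apply_eq_zero_iff).2 (Submodule.le_orthogonal_orthogonal N hy)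
  calc ‖Nᗮ.starProjection x‖ = ‖Nᗮ.starProjection (x - y)‖ := by rw [map_sub, hy0, sub_zero]
    _ ≤ dist x y := by rw [dist_eq_norm]; exact Submodule.norm_starProjection_apply_le _ _

lemma norm_starProjection_orthogonal_le_gapDelta [N.HasOrthogonalProjection] {m : H} (hm : m ∈ M) :
    ‖Nᗮ.starProjection m‖ ≤ gapDelta (M : Set H) N * ‖m‖ := by
  rcases eq_or_ne m 0 with rfl | hm0
  · simp
  have hpos : 0 < ‖m‖ := norm_pos_iff.2 hm0
  set c : 𝕜 := ((‖m‖⁻¹ : ℝ) : 𝕜)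
  have hc : ‖c‖ = ‖m‖⁻¹ := by simp [c]
  have hunit : ‖c • m‖ = 1 := by rw [norm_smul, hc, inv_mul_cancel₀ hpos.ne']
  have key := (norm_starProjection_orthogonal_le_infDist (N := N) (c • m)).trans
    (infDist_le_gapDelta_s12 (M.smul_mem c hm) hunit)
  rw [map_smul, norm_smul, hc, inv_mul_le_iff₀ hpos] at key
  linarith

lemma norm_starProjection_orthogonal_comp_starProjection_le [M.HasOrthogonalProjection]
    [N.HasOrthogonalProjection] :
    ‖Nᗮ.starProjection ∘L M.starProjection‖ ≤ gapDelta (M : Set H) N :=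
  opNorm_le_bound _ (gapDelta_nonneg _ _) fun x =>
    (norm_starProjection_orthogonal_le_gapDelta (M.starProjection_apply_mem x)).trans <|
      mul_le_mul_of_nonneg_left (M.norm_starProjection_apply_le x) (gapDelta_nonneg _ _)

lemma norm_starProjection_comp_starProjection_orthogonal_le [CompleteSpace H]
    [M.HasOrthogonalProjection] [N.HasOrthogonalProjection] :
    ‖N.starProjection ∘L Mᗮ.starProjection‖ ≤ gapDelta (N : Set H) M := by
  have hadj : adjoint (Mᗮ.starProjection ∘L N.starProjection) =
      N.starProjection ∘L Mᗮ.starProjection := by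
    rw [adjoint_comp, (isSelfAdjoint_starProjection N).adjoint_eq,
      (isSelfAdjoint_starProjection Mᗮ).adjoint_eq]
  rw [← hadj, adjoint.norm_map]
  exact norm_starProjection_orthogonal_comp_starProjection_le

theorem norm_starProjection_sub_starProjection_le_gapHat [CompleteSpace H]
    [M.HasOrthogonalProjection] [N.HasOrthogonalProjection] :
    ‖M.starProjection - N.starProjection‖ ≤ gapHat (M : Set H) N := by
  set d := gapHat (M : Set H) N
  have hd : 0 ≤ d := gapHat_nonneg _ _
  refine opNorm_le_bound _ hd fun x => ?_
  set a := Nᗮ.starProjection (M.starProjection x)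
  set b := N.starProjection (Mᗮ.starProjection x)
  have hab : (M.starProjection - N.starProjection) x = a - b := by
    simp only [a, b, sub_apply, Submodule.starProjection_orthogonal', map_sub]
    abel
  have ha : ‖a‖ ≤ d * ‖M.starProjection x‖ :=
    (norm_starProjection_orthogonal_le_gapDelta (M.starProjection_apply_mem x)).trans <|
      mul_le_mul_of_nonneg_right (le_max_left _ _) (norm_nonneg _)
  have hb : ‖b‖ ≤ d * ‖Mᗮ.starProjection x‖ := by
    have : b = (N.starProjection ∘L Mᗮ.starProjection) (Mᗮ.starProjection x) := by
      rw [comp_apply, Submodule.starProjection_eq_self_iff.2 (Mᗮ.starProjection_apply_mem x)]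
    rw [this]
    exact le_of_opNorm_le _
      (norm_starProjection_comp_starProjection_orthogonal_le.trans (le_max_right _ _)) _
  have horth : inner 𝕜 a (-b) = 0 := by
    rw [inner_neg_right, Submodule.inner_left_of_mem_orthogonal (N.starProjection_apply_mem _)
      (Nᗮ.starProjection_apply_mem _), neg_zero]
  have hpyth : ‖a - b‖ ^ 2 = ‖a‖ ^ 2 + ‖b‖ ^ 2 := by
    simpa [sq, sub_eq_add_neg] using
      norm_add_sq_eq_norm_sq_add_norm_sq_of_inner_eq_zero a (-b) horth
  have hx := M.norm_sq_eq_add_norm_sq_starProjection x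
  rw [hab]
  refine le_of_sq_le_sq ?_ (by positivity)
  calc ‖a - b‖ ^ 2 = ‖a‖ ^ 2 + ‖b‖ ^ 2 := hpyth
    _ ≤ (d * ‖M.starProjection x‖) ^ 2 + (d * ‖Mᗮ.starProjection x‖) ^ 2 := by gcongr
    _ = (d * ‖x‖) ^ 2 := by rw [mul_pow, mul_pow, mul_pow, hx]; ring

/-- The compression of `P_M` to `N` is within `‖P_M - P_N‖ < 1` of the identity of `N`, hence
invertible. -/
lemma map_starProjection_eq_of_norm_sub_lt_one [M.HasOrthogonalProjection] [CompleteSpace N]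
    (h : ‖M.starProjection - N.starProjection‖ < 1) :
    M.map (N.starProjection : H →ₗ[𝕜] H) = N := by
  refine le_antisymm (Submodule.map_le_iff_le_comap.2 fun x _ => N.starProjection_apply_mem x)
    fun n hn => ?_
  set e : N →L[𝕜] N := N.orthogonalProjectionOnto ∘L M.starProjection ∘L N.subtypeL
  have hclose : ‖1 - e‖ < 1 := by
    refine lt_of_le_of_lt (opNorm_le_bound _ (norm_nonneg _) fun n => ?_) h
    have : (1 - e) n = N.orthogonalProjectionOnto ((N.starProjection - M.starProjection) n) := by
      simp [e]
    rw [this, norm_sub_rev]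
    exact (N.norm_orthogonalProjectionOnto_apply_le _).trans (le_opNorm _ _)
  have he : Function.Surjective e := by
    have := isUnit_one_sub_of_norm_lt_one hclose
    rw [sub_sub_cancel] at this
    exact (ContinuousLinearMap.isUnit_iff_bijective.1 this).2
  obtain ⟨n₀, hn₀⟩ := he ⟨n, hn⟩
  refine ⟨M.starProjection n₀, M.starProjection_apply_mem _, ?_⟩
  exact congrArg Subtype.val hn₀

end Gap

lemma ContinuousLinearMap.bijective_one_sub_of_norm_lt_one {𝕜 E : Type*}
    [NontriviallyNormedField 𝕜] [NormedAddCommGroup E] [NormedSpace 𝕜 E] [CompleteSpace E]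
    {t : E →L[𝕜] E} (h : ‖t‖ < 1) : Function.Bijective ⇑(1 - t) :=
  isUnit_iff_bijective.1 (isUnit_one_sub_of_norm_lt_one h)

lemma ContinuousLinearMap.units_apply_inv_apply {R M : Type*} [Semiring R] [TopologicalSpace M]
    [AddCommMonoid M] [Module R M] (u : (M →L[R] M)ˣ) (x : M) :
    (u : M →L[R] M) ((↑u⁻¹ : M →L[R] M) x) = x := by
  rw [← mul_apply_eq_comp, u.mul_inv, one_apply_eq_self]

lemma ContinuousLinearMap.units_inv_apply_apply {R M : Type*} [Semiring R] [TopologicalSpace M]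
    [AddCommMonoid M] [Module R M] (u : (M →L[R] M)ˣ) (x : M) :
    (↑u⁻¹ : M →L[R] M) ((u : M →L[R] M) x) = x := by
  rw [← mul_apply_eq_comp, u.inv_mul, one_apply_eq_self]

lemma ContinuousLinearMap.norm_inv_oneSub_le {𝕜 E : Type*}
    [NontriviallyNormedField 𝕜] [NormedAddCommGroup E] [NormedSpace 𝕜 E] [CompleteSpace E]
    (t : E →L[𝕜] E) (h : ‖t‖ < 1) : ‖(↑(Units.oneSub t h)⁻¹ : E →L[𝕜] E)‖ ≤ (1 - ‖t‖)⁻¹ := by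
  have := tsum_geometric_le_of_norm_lt_one t h
  have := norm_id_le (𝕜 := 𝕜) (E := E)
  change ‖∑' n : ℕ, t ^ n‖ ≤ _
  rw [← one_def] at *
  linarith

section Transfer

variable {𝕜 H : Type*} [RCLike 𝕜] [NormedAddCommGroup H] [InnerProductSpace 𝕜 H]
  {M N : Submodule 𝕜 H}

lemma one_sub_starProjection_sub_apply_of_mem [M.HasOrthogonalProjection]
    [N.HasOrthogonalProjection] {m : H} (hm : m ∈ M) :
    (1 - (M.starProjection - N.starProjection)) m = N.starProjection m := by
  rw [sub_apply, sub_apply, Submodule.starProjection_eq_self_iff.2 hm,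
    one_apply_eq_self, sub_sub_cancel]

variable [M.HasOrthogonalProjection] [CompleteSpace N]

lemma map_one_sub_starProjection_sub (h : ‖M.starProjection - N.starProjection‖ < 1) :
    M.map ((1 - (M.starProjection - N.starProjection) : H →L[𝕜] H) : H →ₗ[𝕜] H) = N := by
  refine Eq.trans (SetLike.coe_injective ?_) (map_starProjection_eq_of_norm_sub_lt_one h)
  simp only [Submodule.map_coe]
  exact Set.image_congr fun m hm => one_sub_starProjection_sub_apply_of_mem hm

lemma comap_one_sub_starProjection_sub [CompleteSpace H]
    (h : ‖M.starProjection - N.starProjection‖ < 1) :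
    N.comap ((1 - (M.starProjection - N.starProjection) : H →L[𝕜] H) : H →ₗ[𝕜] H) = M := by
  refine le_antisymm (fun y hy => ?_) fun y hy => ?_
  · obtain ⟨m, hm, hmy⟩ := (map_one_sub_starProjection_sub h).ge hy
    rwa [← (bijective_one_sub_of_norm_lt_one h).1 hmy]
  · exact (map_one_sub_starProjection_sub h).le ⟨y, hy, rfl⟩

end Transfer

namespace IsOuterInv

variable {X Y : Type*} [NormedAddCommGroup X] [NormedSpace ℂ X] [NormedAddCommGroup Y]
  [NormedSpace ℂ Y] {A : X →L[ℂ] Y} {T : Submodule ℂ X} {S : Submodule ℂ Y} {G : Y →L[ℂ] X}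

lemma apply_mem (hG : IsOuterInv A T S G) (y : Y) : G y ∈ T :=
  hG.2.1 ▸ LinearMap.mem_range_self (G : Y →ₗ[ℂ] X) y

lemma apply_eq_zero_iff (hG : IsOuterInv A T S G) {y : Y} : G y = 0 ↔ y ∈ S := by
  rw [← hG.2.2]
  rfl

theorem comp_units_inv (hG : IsOuterInv A T S G) (B : X →L[ℂ] Y) (u : (Y →L[ℂ] Y)ˣ)
    (hu : (u : Y →L[ℂ] Y) = 1 - (A - B) ∘L G) : IsOuterInv B T S (G ∘L ↑u⁻¹) := by
  set v : Y →L[ℂ] Y := ↑u⁻¹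
  have hu_apply : ∀ y, (u : Y →L[ℂ] Y) y = y - (A - B) (G y) := fun y => by
    rw [hu, sub_apply, one_apply_eq_self, comp_apply]
  have hu_S : ∀ {y}, y ∈ S → (u : Y →L[ℂ] Y) y = y := fun hy => by
    rw [hu_apply, hG.apply_eq_zero_iff.2 hy, map_zero, sub_zero]
  have hv_S : ∀ {y}, y ∈ S → v y = y := fun hy => by
    conv_lhs => rw [← hu_S hy]
    exact units_inv_apply_apply u _
  have hGAG : ∀ y, G (A (G y)) = G y := fun y => by
    simpa only [comp_apply] using congrArg (· y) hG.1
  have hGvAG : ∀ y, G (v (A (G y))) = G (v y) := fun y => by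
    have hS : A (G y) - y ∈ S := hG.apply_eq_zero_iff.1 (by rw [map_sub, hGAG, sub_self])
    rw [← sub_eq_zero, ← map_sub, ← map_sub, hv_S hS, hG.apply_eq_zero_iff]
    exact hS
  refine ⟨?_, ?_, ?_⟩
  · ext y
    have hz : (A - B) (G (v y)) = v y - y := by
      have h := hu_apply (v y)
      rw [units_apply_inv_apply, eq_sub_iff_add_eq] at h
      rw [eq_sub_iff_add_eq, add_comm, h]
    have hBG : B (G (v y)) = A (G (v y)) - (v y - y) := by
      rw [← hz, sub_apply, sub_sub_cancel]
    simp only [comp_apply]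
    rw [hBG, map_sub, map_sub, hGvAG, map_sub, map_sub]
    abel
  · ext x
    rw [← hG.2.1, LinearMap.mem_range, LinearMap.mem_range]
    refine ⟨fun ⟨y, hy⟩ => ⟨v y, hy⟩, fun ⟨y, hy⟩ => ⟨(u : Y →L[ℂ] Y) y, ?_⟩⟩
    change G (v _) = x
    rwa [units_inv_apply_apply]
  · ext y
    rw [← hG.2.2, LinearMap.mem_ker, LinearMap.mem_ker]
    change G (v y) = 0 ↔ G y = 0
    rw [hG.apply_eq_zero_iff, hG.apply_eq_zero_iff]
    refine ⟨fun h => ?_, fun h => (hv_S h).symm ▸ h⟩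
    rwa [← units_apply_inv_apply u y, hu_S h]

theorem comp_comp_of_surjective {V : X →L[ℂ] X} {W : Y →L[ℂ] Y} {H : Y →L[ℂ] X}
    (hH : IsOuterInv (W ∘L (A ∘L V)) T S H) (hV : Set.InjOn V T) (hW : Function.Surjective W) :
    IsOuterInv A (T.map (V : X →ₗ[ℂ] X)) (S.comap (W : Y →ₗ[ℂ] Y)) (V ∘L (H ∘L W)) := by
  refine ⟨?_, ?_, ?_⟩
  · ext y
    simpa only [comp_apply] using congrArg (fun F : Y →L[ℂ] X => V (F (W y))) hH.1
  · ext x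
    rw [LinearMap.mem_range, Submodule.mem_map]
    refine ⟨fun ⟨y, hy⟩ => ⟨H (W y), hH.apply_mem _, hy⟩, fun ⟨t, ht, htx⟩ => ?_⟩
    obtain ⟨z, rfl⟩ : t ∈ LinearMap.range (H : Y →ₗ[ℂ] X) := hH.2.1 ▸ ht
    obtain ⟨y, rfl⟩ := hW z
    exact ⟨y, htx⟩
  · ext y
    rw [LinearMap.mem_ker, Submodule.mem_comap, ← hH.apply_eq_zero_iff]
    change V (H (W y)) = 0 ↔ _
    rw [← map_zero V, hV.eq_iff (hH.apply_mem _) T.zero_mem, map_zero]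
    rfl

end IsOuterInv

section Estimates

variable {𝕜 X Y : Type*} [RCLike 𝕜] [NormedAddCommGroup X] [InnerProductSpace 𝕜 X]
  [NormedAddCommGroup Y] [InnerProductSpace 𝕜 Y] {T T' : Submodule 𝕜 X} {S S' : Submodule 𝕜 Y}
  [T.HasOrthogonalProjection] [T'.HasOrthogonalProjection] [S.HasOrthogonalProjection]
  [S'.HasOrthogonalProjection]

lemma norm_sub_comp_one_sub_starProjection_sub_comp_le (A : X →L[𝕜] Y) {G : Y →L[𝕜] X}
    (hG : ∀ y, G y ∈ T) :
    ‖(A - (1 - (S'.starProjection - S.starProjection)) ∘L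
        (A ∘L (1 - (T.starProjection - T'.starProjection)))) ∘L G‖ ≤
      ‖G‖ * ‖A‖ * (‖T.starProjection - T'.starProjection‖ +
        ‖S'.starProjection - S.starProjection‖) := by
  refine opNorm_le_bound _ (by positivity) fun y => ?_
  set g := G y
  have hg : T.starProjection g = g := Submodule.starProjection_eq_self_iff.2 (hG y)
  have hsplit : ((A - (1 - (S'.starProjection - S.starProjection)) ∘L
      (A ∘L (1 - (T.starProjection - T'.starProjection)))) ∘L G) y =
      A ((T.starProjection - T'.starProjection) g) +
        (S'.starProjection - S.starProjection) (A (T'.starProjection g)) := by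
    simp only [comp_apply, sub_apply, one_sub_starProjection_sub_apply_of_mem (hG y),
      one_apply_eq_self, map_sub, hg, g]
    abel
  rw [hsplit]
  calc _ ≤ ‖A‖ * (‖T.starProjection - T'.starProjection‖ * ‖g‖) +
        ‖S'.starProjection - S.starProjection‖ * (‖A‖ * ‖g‖) := by
        refine (norm_add_le _ _).trans (add_le_add ?_ ?_)
        · exact A.le_opNorm_of_le (le_opNorm _ _)
        · exact le_opNorm_of_le _ (A.le_opNorm_of_le (T'.norm_starProjection_apply_le g))
    _ = ‖A‖ * (‖T.starProjection - T'.starProjection‖ +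
        ‖S'.starProjection - S.starProjection‖) * ‖g‖ := by ring
    _ ≤ ‖A‖ * (‖T.starProjection - T'.starProjection‖ +
        ‖S'.starProjection - S.starProjection‖) * (‖G‖ * ‖y‖) := by
        gcongr
        exact G.le_opNorm y
    _ = _ := by ring

lemma norm_one_sub_starProjection_sub_comp_comp_le {H : Y →L[𝕜] X} (hH : ∀ y, H y ∈ T)
    (hS : ∀ y ∈ S, H y = 0) :
    ‖(1 - (T.starProjection - T'.starProjection)) ∘L
        (H ∘L (1 - (S'.starProjection - S.starProjection)))‖ ≤ ‖H‖ := by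
  refine opNorm_le_bound _ (norm_nonneg _) fun y => ?_
  have hy : H ((1 - (S'.starProjection - S.starProjection)) y) = H (S'ᗮ.starProjection y) := by
    rw [Submodule.starProjection_orthogonal_val, sub_apply, sub_apply, one_apply_eq_self,
      sub_sub_eq_add_sub, map_sub, map_add, hS _ (S.starProjection_apply_mem y), add_zero,
      map_sub]
  rw [comp_apply, comp_apply, hy, one_sub_starProjection_sub_apply_of_mem (hH _)]
  calc _ ≤ ‖H (S'ᗮ.starProjection y)‖ := T'.norm_starProjection_apply_le _
    _ ≤ ‖H‖ * ‖y‖ := H.le_opNorm_of_le (S'ᗮ.norm_starProjection_apply_le y)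

end Estimates

lemma lt_one_of_max_lt_one_div_one_add_sq {a b c : ℝ} (hc : 0 ≤ c)
    (h : max a b < 1 / (1 + c) ^ 2) : a < 1 ∧ b < 1 ∧ c * (a + b) < 1 := by
  have hq : 0 < (1 + c) ^ 2 := by positivity
  have hle : 1 / (1 + c) ^ 2 ≤ 1 := by rw [div_le_one hq]; nlinarith
  have ha := (le_max_left a b).trans_lt h
  have hb := (le_max_right a b).trans_lt h
  refine ⟨ha.trans_le hle, hb.trans_le hle, ?_⟩
  calc c * (a + b) ≤ c * (2 / (1 + c) ^ 2) := by
        gcongr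
        linarith [show 2 / (1 + c) ^ 2 = 1 / (1 + c) ^ 2 + 1 / (1 + c) ^ 2 by ring]
    _ < 1 := by rw [mul_div_assoc', div_lt_one hq]; nlinarith

variable {X Y : Type*} [NormedAddCommGroup X] [InnerProductSpace ℂ X] [CompleteSpace X]
  [NormedAddCommGroup Y] [InnerProductSpace ℂ Y] [CompleteSpace Y]
theorem stmt_12 (A : X →L[ℂ] Y) (T T' : Submodule ℂ X) (S S' : Submodule ℂ Y)
    (hT : IsClosed (T : Set X)) (hT' : IsClosed (T' : Set X))
    (hS : IsClosed (S : Set Y)) (hS' : IsClosed (S' : Set Y))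
    (G : Y →L[ℂ] X) (hG : IsOuterInv A T S G)
    (hgap : max (gapHat (T : Set X) (T' : Set X)) (gapHat (S : Set Y) (S' : Set Y)) <
      1 / (1 + ‖A‖ * ‖G‖) ^ 2) :
    ∃ G' : Y →L[ℂ] X, IsOuterInv A T' S' G' ∧
      ‖G'‖ ≤ ‖G‖ /
        (1 - ‖G‖ * ‖A‖ * (gapHat (T : Set X) (T' : Set X) + gapHat (S : Set Y) (S' : Set Y))) := by
  have := hT.completeSpace_coe
  have := hT'.completeSpace_coe
  have := hS.completeSpace_coe
  have := hS'.completeSpace_coe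
  obtain ⟨hdT, hdS, hk⟩ := lt_one_of_max_lt_one_div_one_add_sq (by positivity) hgap
  have hPT : ‖T.starProjection - T'.starProjection‖ ≤ gapHat (T : Set X) T' :=
    norm_starProjection_sub_starProjection_le_gapHat
  have hPS : ‖S'.starProjection - S.starProjection‖ ≤ gapHat (S : Set Y) S' :=
    norm_starProjection_sub_starProjection_le_gapHat.trans_eq (max_comm _ _)
  have hPT1 := hPT.trans_lt hdT
  have hPS1 := hPS.trans_lt hdS
  set k := ‖G‖ * ‖A‖ * (gapHat (T : Set X) T' + gapHat (S : Set Y) S')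
  have hk1 : k < 1 := by simpa only [k, mul_comm ‖G‖] using hk
  set t := (A - (1 - (S'.starProjection - S.starProjection)) ∘L
    (A ∘L (1 - (T.starProjection - T'.starProjection)))) ∘L G
  have htk : ‖t‖ ≤ k := (norm_sub_comp_one_sub_starProjection_sub_comp_le A hG.apply_mem).trans
    (mul_le_mul_of_nonneg_left (add_le_add hPT hPS) (by positivity))
  set u := Units.oneSub t (htk.trans_lt hk1)
  have hH := hG.comp_units_inv _ u (Units.val_oneSub t _)
  have hG' := hH.comp_comp_of_surjective (bijective_one_sub_of_norm_lt_one hPT1).1.injOn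
    (bijective_one_sub_of_norm_lt_one hPS1).2
  rw [map_one_sub_starProjection_sub hPT1, comap_one_sub_starProjection_sub hPS1] at hG'
  refine ⟨_, hG', ?_⟩
  calc _ ≤ ‖G ∘L (↑u⁻¹ : Y →L[ℂ] Y)‖ :=
        norm_one_sub_starProjection_sub_comp_comp_le hH.apply_mem fun _ => hH.apply_eq_zero_iff.2
    _ ≤ ‖G‖ * (1 - ‖t‖)⁻¹ :=
        (opNorm_comp_le _ _).trans (by gcongr; exact norm_inv_oneSub_le t _)
    _ ≤ ‖G‖ / (1 - k) := by
        rw [div_eq_mul_inv]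
        gcongr
end
end

section
/- Let X, Y be Hilbert spaces, A, E ∈ B(X,Y), Ā = A + E, and T ⊆ X, S ⊆ Y closed subspaces such that G = A_{T,S}^{(2)} exists and ‖G‖·‖E‖ < 1. Then ‖Ā_{T,S}^{(2)}‖ ≤ ‖G‖/(1 − ‖G‖·‖E‖) and ‖Ā_{T,S}^{(2)} − G‖ ≤ ‖G‖²·‖E‖/(1 − ‖G‖·‖E‖). -/
noncomputable section

open ContinuousLinearMap

variable {X Y : Type*} [NormedAddCommGroup X] [InnerProductSpace ℂ X] [CompleteSpace X]
  [NormedAddCommGroup Y] [InnerProductSpace ℂ Y] [CompleteSpace Y]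
/-! The perturbed outer inverse is `Ḡ = (1 + GE)⁻¹ G`, the Neumann series converging because
`‖GE‖ ≤ ‖G‖‖E‖ < 1`. From `GAG = G` one gets `G(A + E)G = (1 + GE)G`, which gives `ḠĀḠ = Ḡ`,
and the push-through identity `(1 + GE)G = G(1 + EG)` shows `Ḡ = G(1 + EG)⁻¹`; so `Ḡ` has the
range of `G` (a right factor is onto) and its kernel (a left factor is injective). Both norm
bounds come from `Ḡ - G = -GEḠ`. -/

theorem isUnit_one_add_of_norm_lt_one {R : Type*} [NormedRing R] [HasSummableGeomSeries R]
    {x : R} (h : ‖x‖ < 1) : IsUnit (1 + x) := by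
  simpa using isUnit_one_sub_of_norm_lt_one (x := -x) (by rwa [norm_neg])

namespace ContinuousLinearMap

variable {𝕜 X Y : Type*} [NontriviallyNormedField 𝕜] [NormedAddCommGroup X] [NormedSpace 𝕜 X]
  [NormedAddCommGroup Y] [NormedSpace 𝕜 Y]

theorem one_add_comp_comp_eq_comp_one_add (G : Y →L[𝕜] X) (E : X →L[𝕜] Y) :
    (1 + G ∘L E) ∘L G = G ∘L (1 + E ∘L G) := by
  ext y
  simp

theorem ringInverse_one_add_comp_comp (G : Y →L[𝕜] X) (E : X →L[𝕜] Y)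
    (hU : IsUnit (1 + G ∘L E)) (hW : IsUnit (1 + E ∘L G)) :
    Ring.inverse (1 + G ∘L E) ∘L G = G ∘L Ring.inverse (1 + E ∘L G) := by
  calc Ring.inverse (1 + G ∘L E) ∘L G
      = Ring.inverse (1 + G ∘L E) ∘L G ∘L ((1 + E ∘L G) * Ring.inverse (1 + E ∘L G)) := by
        rw [Ring.mul_inverse_cancel _ hW]; exact (comp_id _).symm
    _ = (Ring.inverse (1 + G ∘L E) * (1 + G ∘L E)) ∘L G ∘L Ring.inverse (1 + E ∘L G) := by
        rw [mul_def, mul_def, ← comp_assoc G, ← one_add_comp_comp_eq_comp_one_add]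
        simp only [comp_assoc]
    _ = G ∘L Ring.inverse (1 + E ∘L G) := by
        rw [Ring.inverse_mul_cancel _ hU]; exact id_comp _

theorem norm_comp_sub_self_le {K V : X →L[𝕜] X} (hV : (1 + K) * V = 1) (F : Y →L[𝕜] X) :
    ‖V ∘L F - F‖ ≤ ‖K‖ * ‖V ∘L F‖ := by
  have hVF : V ∘L F - F = -(K ∘L V ∘L F) := by
    ext y
    have h := DFunLike.congr_fun hV (F y)
    simp only [mul_apply_eq_comp, add_apply, one_apply_eq_self] at h
    simp only [sub_apply, neg_apply, comp_apply]
    rw [eq_neg_iff_add_eq_zero, sub_add_eq_add_sub, h, sub_self]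
  rw [hVF, norm_neg]
  exact opNorm_comp_le K _

theorem norm_comp_le_div {K V : X →L[𝕜] X} {c : ℝ} (hV : (1 + K) * V = 1) (hK : ‖K‖ ≤ c)
    (hc : c < 1) (F : Y →L[𝕜] X) : ‖V ∘L F‖ ≤ ‖F‖ / (1 - c) := by
  have h : ‖V ∘L F‖ ≤ ‖F‖ + ‖K‖ * ‖V ∘L F‖ := by
    linarith [norm_le_norm_add_norm_sub' (V ∘L F) F, norm_comp_sub_self_le hV F]
  rw [le_div_iff₀ (by linarith)]
  nlinarith [mul_le_mul_of_nonneg_right hK (norm_nonneg (V ∘L F))]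

theorem norm_comp_sub_self_le_div {K V : X →L[𝕜] X} {c : ℝ} (hV : (1 + K) * V = 1)
    (hK : ‖K‖ ≤ c) (hc : c < 1) (F : Y →L[𝕜] X) : ‖V ∘L F - F‖ ≤ c * ‖F‖ / (1 - c) := by
  calc ‖V ∘L F - F‖ ≤ ‖K‖ * ‖V ∘L F‖ := norm_comp_sub_self_le hV F
    _ ≤ c * (‖F‖ / (1 - c)) := by
        gcongr
        · exact (norm_nonneg K).trans hK
        · exact norm_comp_le_div hV hK hc F
    _ = c * ‖F‖ / (1 - c) := mul_div_assoc' _ _ _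

end ContinuousLinearMap

section OuterInverse

variable {X Y : Type*} [NormedAddCommGroup X] [NormedSpace ℂ X]
  [NormedAddCommGroup Y] [NormedSpace ℂ Y]

theorem IsOuterInv.add {A E : X →L[ℂ] Y} {T : Submodule ℂ X} {S : Submodule ℂ Y}
    {G : Y →L[ℂ] X} (hG : IsOuterInv A T S G)
    (hU : IsUnit (1 + G ∘L E)) (hW : IsUnit (1 + E ∘L G)) :
    IsOuterInv (A + E) T S (Ring.inverse (1 + G ∘L E) ∘L G) := by
  obtain ⟨hGAG, hrange, hker⟩ := hG
  set V := Ring.inverse (1 + G ∘L E)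
  set W := Ring.inverse (1 + E ∘L G)
  have hVG : V ∘L G = G ∘L W := ringInverse_one_add_comp_comp G E hU hW
  have hVU : V * (1 + G ∘L E) = 1 := Ring.inverse_mul_cancel _ hU
  have hUV : (1 + G ∘L E) * V = 1 := Ring.mul_inverse_cancel _ hU
  have hWW : W * (1 + E ∘L G) = 1 := Ring.inverse_mul_cancel _ hW
  have hGAEG : G ∘L ((A + E) ∘L G) = (1 + G ∘L E) ∘L G := by
    rw [add_comp, comp_add, hGAG, add_comp, one_def, id_comp, comp_assoc]
  have hV_inj : Function.Injective V :=
    Function.LeftInverse.injective (g := (1 + G ∘L E : X →L[ℂ] X)) (DFunLike.congr_fun hUV)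
  have hW_surj : Function.Surjective W :=
    Function.RightInverse.surjective (g := (1 + E ∘L G : Y →L[ℂ] Y)) (DFunLike.congr_fun hWW)
  refine ⟨?_, ?_, ?_⟩
  · calc V ∘L G ∘L (A + E) ∘L V ∘L G = V ∘L (G ∘L ((A + E) ∘L G)) ∘L W := by
          rw [hVG]; simp only [comp_assoc]
      _ = (V * (1 + G ∘L E)) ∘L G ∘L W := by rw [hGAEG, mul_def]; simp only [comp_assoc]
      _ = V ∘L G := by rw [hVU, hVG]; exact id_comp _
  · rw [hVG, toLinearMap_comp,
      LinearMap.range_comp_of_range_eq_top _ (LinearMap.range_eq_top.mpr hW_surj), hrange]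
  · rw [toLinearMap_comp,
      LinearMap.ker_comp_of_ker_eq_bot _ (LinearMap.ker_eq_bot.mpr hV_inj), hker]

end OuterInverse

theorem stmt_15_general (A E : X →L[ℂ] Y) (T : Submodule ℂ X) (S : Submodule ℂ Y)
    (G : Y →L[ℂ] X) (hG : IsOuterInv A T S G)
    (hE : ‖G‖ * ‖E‖ < 1) :
    ∃ Gbar : Y →L[ℂ] X, IsOuterInv (A + E) T S Gbar ∧
      ‖Gbar‖ ≤ ‖G‖ / (1 - ‖G‖ * ‖E‖) ∧
      ‖Gbar - G‖ ≤ ‖G‖ ^ 2 * ‖E‖ / (1 - ‖G‖ * ‖E‖) := by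
  have hGE : ‖G ∘L E‖ ≤ ‖G‖ * ‖E‖ := opNorm_comp_le G E
  have hEG : ‖E ∘L G‖ < 1 := (opNorm_comp_le E G).trans_lt (by rwa [mul_comm])
  have hU : IsUnit (1 + G ∘L E) := isUnit_one_add_of_norm_lt_one (hGE.trans_lt hE)
  have hV := Ring.mul_inverse_cancel _ hU
  refine ⟨_, hG.add hU (isUnit_one_add_of_norm_lt_one hEG), norm_comp_le_div hV hGE hE G, ?_⟩
  calc _ ≤ ‖G‖ * ‖E‖ * ‖G‖ / (1 - ‖G‖ * ‖E‖) := norm_comp_sub_self_le_div hV hGE hE G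
    _ = ‖G‖ ^ 2 * ‖E‖ / (1 - ‖G‖ * ‖E‖) := by ring

theorem stmt_15 (A E : X →L[ℂ] Y) (T : Submodule ℂ X) (S : Submodule ℂ Y)
    (hT : IsClosed (T : Set X)) (hS : IsClosed (S : Set Y))
    (G : Y →L[ℂ] X) (hG : IsOuterInv A T S G)
    (hE : ‖G‖ * ‖E‖ < 1) :
    ∃ Gbar : Y →L[ℂ] X, IsOuterInv (A + E) T S Gbar ∧
      ‖Gbar‖ ≤ ‖G‖ / (1 - ‖G‖ * ‖E‖) ∧
      ‖Gbar - G‖ ≤ ‖G‖ ^ 2 * ‖E‖ / (1 - ‖G‖ * ‖E‖) :=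
  stmt_15_general A E T S G hG hE
end
end
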